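/- arXiv:math/0209022 — 3 statements merged into one kernel-verified Lean document; each statement's English description precedes it below -/
import Mathlib

section
/- If X is a closed set of permutations with a regular rank-encoding E(X) ⊆ [k]*, then the enumeration sequence a_n = |{σ ∈ X : |σ| = n}| satisfies a linear recurrence with constant coefficients (equivalently, X has a rational generating function). -/
/-- Pattern involvement: `π ⪯ σ` iff `σ` has a subsequence order-isomorphic to `π`. -/
def Involves {m n : ℕ} (π : Equiv.Perm (Fin m)) (σ : Equiv.Perm (Fin n)) : Prop :=
  ∃ e : Fin m ↪o Fin n, ∀ a b : Fin m, π a < π b ↔ σ (e a) < σ (e b)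

/-- Rank encoding: `rankEnc π i = |{j ≥ i : π j ≤ π i}|`. -/
def rankEnc {n : ℕ} (π : Equiv.Perm (Fin n)) (i : Fin n) : ℕ :=
  (Finset.univ.filter fun j : Fin n => i ≤ j ∧ π j ≤ π i).card

/-- A family of sets of permutations (one set per length) closed under involvement. -/
def ClosedFamily (X : ∀ n : ℕ, Set (Equiv.Perm (Fin n))) : Prop :=
  ∀ (m n : ℕ) (π : Equiv.Perm (Fin m)) (σ : Equiv.Perm (Fin n)),
    σ ∈ X n → Involves π σ → π ∈ X m


open Finset in
lemma rankEnc_key {n : ℕ} (π : Equiv.Perm (Fin n)) (i : Fin n) :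
    rankEnc π i + (univ.filter fun j : Fin n => j < i ∧ π j ≤ π i).card = (π i : ℕ) + 1 := by
  classical
  have hsplit : (univ.filter fun j : Fin n => π j ≤ π i)
      = (univ.filter fun j : Fin n => i ≤ j ∧ π j ≤ π i)
        ∪ (univ.filter fun j : Fin n => j < i ∧ π j ≤ π i) := by
    ext j
    simp only [mem_filter, mem_union, mem_univ, true_and]
    rcases le_or_gt i j with h | h <;> tauto
  have hdisj : Disjoint (univ.filter fun j : Fin n => i ≤ j ∧ π j ≤ π i)
      (univ.filter fun j : Fin n => j < i ∧ π j ≤ π i) := by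
    simp only [Finset.disjoint_left, mem_filter, mem_univ, true_and, not_and, not_le]
    intro j h1 h2
    exact absurd h2 (not_lt.mpr h1.1)
  have hcard : (univ.filter fun j : Fin n => π j ≤ π i).card = (π i : ℕ) + 1 := by
    have : (univ.filter fun j : Fin n => π j ≤ π i).card
        = (Finset.Iic (π i)).card := by
      apply Finset.card_bij (fun j _ => π j)
      · intro a ha; simp only [mem_filter] at ha; simpa using ha.2
      · intro a _ b _ h; exact π.injective h
      · intro b hb; exact ⟨π.symm b, by simpa using hb, by simp⟩
    rw [this, Fin.card_Iic]
  rw [hsplit, Finset.card_union_of_disjoint hdisj] at hcard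
  unfold rankEnc
  omega

open Finset in
lemma rankEnc_aux {n : ℕ} (π π' : Equiv.Perm (Fin n)) (i : Fin n)
    (hIH : ∀ j, j < i → π j = π' j)
    (henc : rankEnc π i = rankEnc π' i) : ¬ π i < π' i := by
  classical
  intro hlt
  have key := rankEnc_key π i
  have key' := rankEnc_key π' i
  have hA' : (univ.filter fun j : Fin n => j < i ∧ π' j ≤ π' i)
      = (univ.filter fun j : Fin n => j < i ∧ π j ≤ π' i) := by
    apply Finset.filter_congr
    intro j _
    constructor <;> rintro ⟨hj, h2⟩ <;> exact ⟨hj, by rwa [hIH j hj] at *⟩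
  rw [hA'] at key'
  -- split A' into A ∪ S
  set A := univ.filter fun j : Fin n => j < i ∧ π j ≤ π i with hA
  set S := univ.filter fun j : Fin n => j < i ∧ π i < π j ∧ π j ≤ π' i with hS
  have hsplit : (univ.filter fun j : Fin n => j < i ∧ π j ≤ π' i) = A ∪ S := by
    ext j
    simp only [hA, hS, mem_filter, mem_union, mem_univ, true_and]
    constructor
    · rintro ⟨hj, h2⟩
      rcases le_or_gt (π j) (π i) with h | h
      · exact Or.inl ⟨hj, h⟩
      · exact Or.inr ⟨hj, h, h2⟩
    · rintro (⟨hj, h2⟩ | ⟨hj, h2, h3⟩)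
      · exact ⟨hj, le_trans h2 hlt.le⟩
      · exact ⟨hj, h3⟩
  have hdisj : Disjoint A S := by
    simp only [Finset.disjoint_left, hA, hS, mem_filter, mem_univ, true_and, not_and]
    intro j h1 h2 hc
    exact absurd h1.2 (not_le.mpr hc)
  rw [hsplit, Finset.card_union_of_disjoint hdisj] at key'
  have hfin : (π i : ℕ) < (π' i : ℕ) := hlt
  have hScard : S.card = (π' i : ℕ) - (π i : ℕ) := by omega
  -- image of S under π is contained in Ioc (π i) (π' i)
  have himg : S.image π ⊆ Finset.Ioc (π i) (π' i) := by
    intro v hv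
    simp only [Finset.mem_image, hS, mem_filter, mem_univ, true_and] at hv
    obtain ⟨j, ⟨_, h2, h3⟩, rfl⟩ := hv
    exact Finset.mem_Ioc.mpr ⟨h2, h3⟩
  have hcardimg : (S.image π).card = S.card := Finset.card_image_of_injective _ π.injective
  have heq : S.image π = Finset.Ioc (π i) (π' i) := by
    apply Finset.eq_of_subset_of_card_le himg
    rw [hcardimg, hScard, Fin.card_Ioc]
  have hmem : π' i ∈ S.image π := by
    rw [heq]; exact Finset.mem_Ioc.mpr ⟨hlt, le_refl _⟩
  obtain ⟨j, hjS, hj⟩ := Finset.mem_image.mp hmem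
  simp only [hS, mem_filter, mem_univ, true_and] at hjS
  have : π' j = π' i := by rw [← hIH j hjS.1, hj]
  have : j = i := π'.injective this
  exact absurd hjS.1 (by rw [this]; exact lt_irrefl i)

lemma rankEnc_injective {n : ℕ} (π π' : Equiv.Perm (Fin n))
    (h : ∀ i, rankEnc π i = rankEnc π' i) : π = π' := by
  classical
  suffices hall : ∀ i : Fin n, π i = π' i by
    ext i
    exact congrArg Fin.val (hall i)
  have hmain : ∀ m : ℕ, ∀ i : Fin n, (i : ℕ) = m → π i = π' i := by
    intro m
    induction m using Nat.strong_induction_on with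
    | _ m IH =>
      intro i him
      have hIH : ∀ j, j < i → π j = π' j := fun j hj => IH (j : ℕ) (him ▸ hj) j rfl
      rcases lt_trichotomy (π i) (π' i) with hlt | heq | hgt
      · exact absurd hlt (rankEnc_aux π π' i hIH (h i))
      · exact heq
      · have hIH' : ∀ j, j < i → π' j = π j := fun j hj => (hIH j hj).symm
        exact absurd hgt (rankEnc_aux π' π i hIH' (h i).symm)
  exact fun i => hmain (i : ℕ) i rfl

open Finset

section counting

variable {S : Type} [Fintype S] [DecidableEq S] (M : DFA ℕ S) (k : ℕ)

/-- word associated to a vector of letters -/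
def wd {n : ℕ} (v : Fin n → Fin (k + 1)) : List ℕ := (List.ofFn v).map Fin.val

/-- transition-count matrix -/
noncomputable def transM : Matrix S S ℚ :=
  fun q q' => ((Finset.univ.filter fun a : Fin (k + 1) => M.step q (a : ℕ) = q').card : ℚ)

lemma transM_pow (n : ℕ) (q q'' : S) :
    (transM M k ^ n) q q''
      = ((Finset.univ.filter fun v : Fin n → Fin (k + 1) =>
            M.evalFrom q (wd k v) = q'').card : ℚ) := by
  induction n generalizing q with
  | zero =>
    have hwd : ∀ v : Fin 0 → Fin (k + 1), wd k v = [] := by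
      intro v; simp [wd]
    by_cases h : q = q''
    · subst h
      simp only [pow_zero, Matrix.one_apply_eq]
      have : (Finset.univ.filter fun v : Fin 0 → Fin (k + 1) =>
          M.evalFrom q (wd k v) = q) = Finset.univ := by
        apply Finset.filter_true_of_mem
        intro v _
        rw [hwd v]
        rfl
      rw [this]
      simp
    · rw [pow_zero, Matrix.one_apply_ne h]
      have : (Finset.univ.filter fun v : Fin 0 → Fin (k + 1) =>
          M.evalFrom q (wd k v) = q'') = ∅ := by
        apply Finset.filter_false_of_mem
        intro v _
        rw [hwd v]
        exact fun hc => h hc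
      rw [this]
      simp
  | succ n IH =>
    have hcons : ∀ (a : Fin (k+1)) (w : Fin n → Fin (k+1)),
        wd k (Fin.cons a w) = (a : ℕ) :: wd k w := by
      intro a w
      simp [wd, List.ofFn_succ, Fin.cons]
    have hfib : (Finset.univ.filter fun v : Fin (n+1) → Fin (k + 1) =>
          M.evalFrom q (wd k v) = q'').card
        = ∑ a : Fin (k + 1),
            (Finset.univ.filter fun w : Fin n → Fin (k + 1) =>
              M.evalFrom (M.step q (a : ℕ)) (wd k w) = q'').card := by
      rw [Finset.card_eq_sum_card_fiberwise
        (f := fun v : Fin (n+1) → Fin (k+1) => v 0) (t := Finset.univ)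
        (fun _ _ => Finset.mem_univ _)]
      apply Finset.sum_congr rfl
      intro a _
      apply Finset.card_bij' (fun v _ => Fin.tail v)
        (fun w _ => (Fin.cons a w : Fin (n+1) → Fin (k+1)))
      · intro v hv
        simp only [Finset.mem_filter, Finset.mem_univ, true_and] at hv ⊢
        obtain ⟨h1, h2⟩ := hv
        have hv2 : v = (Fin.cons a (Fin.tail v) : Fin (n+1) → Fin (k+1)) := by
          rw [← h2]; exact (Fin.cons_self_tail v).symm
        rw [hv2, hcons] at h1
        exact h1
      · intro w hw
        simp only [Finset.mem_filter, Finset.mem_univ, true_and] at hw ⊢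
        refine ⟨?_, ?_⟩
        · rw [hcons]
          exact hw
        · rfl
      · intro v hv
        simp only [Finset.mem_filter, Finset.mem_univ, true_and] at hv
        rw [← hv.2]
        exact Fin.cons_self_tail v
      · intro w _
        funext i
        simp [Fin.tail]
    have hA : ∀ q' : S, transM M k q q'
        = ∑ a : Fin (k + 1), if M.step q (a : ℕ) = q' then (1 : ℚ) else 0 := by
      intro q'
      rw [transM, Finset.card_filter]
      push_cast
      rfl
    calc (transM M k ^ (n+1)) q q''
        = ∑ q' : S, transM M k q q' * (transM M k ^ n) q' q'' := by
          rw [pow_succ']; exact Matrix.mul_apply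
      _ = ∑ q' : S, ∑ a : Fin (k+1),
            (if M.step q (a : ℕ) = q' then (1:ℚ) else 0) * (transM M k ^ n) q' q'' := by
          apply Finset.sum_congr rfl
          intro q' _
          rw [hA q', Finset.sum_mul]
      _ = ∑ a : Fin (k+1), ∑ q' : S,
            (if M.step q (a : ℕ) = q' then (1:ℚ) else 0) * (transM M k ^ n) q' q'' := by
          exact Finset.sum_comm
      _ = ∑ a : Fin (k+1), (transM M k ^ n) (M.step q (a : ℕ)) q'' := by
          apply Finset.sum_congr rfl
          intro a _
          simp [ite_mul]
      _ = ((Finset.univ.filter fun v : Fin (n+1) → Fin (k + 1) =>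
            M.evalFrom q (wd k v) = q'').card : ℚ) := by
          rw [hfib]
          push_cast
          apply Finset.sum_congr rfl
          intro a _
          exact IH (M.step q (a : ℕ))

end counting


lemma charpoly_pow_rec {S : Type} [Fintype S] [DecidableEq S] [Nonempty S]
    (A : Matrix S S ℚ) (n : ℕ) :
    A ^ (n + Fintype.card S)
      = ∑ i ∈ Finset.range (Fintype.card S), (-(A.charpoly.coeff i)) • A ^ (n + i) := by
  have hdeg : A.charpoly.natDegree = Fintype.card S := A.charpoly_natDegree_eq_dim
  have h0 : (Polynomial.aeval A) A.charpoly = 0 := A.aeval_self_charpoly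
  rw [Polynomial.aeval_eq_sum_range, hdeg, Finset.sum_range_succ] at h0
  have hlead : A.charpoly.coeff (Fintype.card S) = 1 := by
    conv_lhs => rw [← hdeg]
    exact A.charpoly_monic.coeff_natDegree
  rw [hlead, one_smul] at h0
  have hAd : A ^ Fintype.card S
      = ∑ i ∈ Finset.range (Fintype.card S), (-(A.charpoly.coeff i)) • A ^ i := by
    have h1 : A ^ Fintype.card S
        = -∑ i ∈ Finset.range (Fintype.card S), (A.charpoly.coeff i) • A ^ i :=
      eq_neg_of_add_eq_zero_right h0
    rw [h1, ← Finset.sum_neg_distrib]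
    exact Finset.sum_congr rfl fun i _ => (neg_smul _ _).symm
  rw [pow_add, hAd, Finset.mul_sum]
  exact Finset.sum_congr rfl fun i _ => by rw [mul_smul_comm, ← pow_add]

open Finset in
lemma count_eq {S : Type} [Fintype S] [DecidableEq S] (M : DFA ℕ S)
    [DecidablePred (· ∈ M.accept)] (k : ℕ)
    (X : ∀ n : ℕ, Set (Equiv.Perm (Fin n)))
    (hsub : ∀ n : ℕ, ∀ π ∈ X n, ∀ i, rankEnc π i ≤ k)
    (hM : M.accepts = {w : List ℕ | ∃ n, ∃ π ∈ X n, w = List.ofFn (rankEnc π)})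
    (m : ℕ) :
    ((X m).ncard : ℚ)
      = ∑ q' : S, if q' ∈ M.accept then (transM M k ^ m) M.start q' else 0 := by
  classical
  have hfinX : (X m).Finite := Set.toFinite _
  have step1 : (X m).ncard
      = (Finset.univ.filter fun v : Fin m → Fin (k + 1) =>
          M.evalFrom M.start (wd k v) ∈ M.accept).card := by
    rw [Set.ncard_eq_toFinset_card (X m) hfinX]
    apply Finset.card_bij
      (fun π hπ => fun j : Fin m =>
        (⟨rankEnc π j, Nat.lt_succ_of_le
          (hsub m π (hfinX.mem_toFinset.mp hπ) j)⟩ : Fin (k + 1)))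
    · intro π hπ
      simp only [Finset.mem_filter, Finset.mem_univ, true_and]
      have hwd : wd k (fun j : Fin m =>
          (⟨rankEnc π j, Nat.lt_succ_of_le
            (hsub m π (hfinX.mem_toFinset.mp hπ) j)⟩ : Fin (k + 1)))
          = List.ofFn (rankEnc π) := by
        unfold wd
        rw [List.map_ofFn]
        rfl
      rw [hwd]
      have hmem : List.ofFn (rankEnc π) ∈ M.accepts := by
        rw [hM]
        exact ⟨m, π, hfinX.mem_toFinset.mp hπ, rfl⟩
      exact (DFA.mem_accepts M).mp hmem
    · intro π hπ π' hπ' heq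
      apply rankEnc_injective
      intro j
      have := congrFun heq j
      exact congrArg Fin.val this
    · intro v hv
      simp only [Finset.mem_filter, Finset.mem_univ, true_and] at hv
      have hacc : wd k v ∈ M.accepts := (DFA.mem_accepts M).mpr hv
      rw [hM] at hacc
      obtain ⟨n', π, hπ, hw⟩ := hacc
      have hwd : wd k v = List.ofFn (fun j => ((v j : ℕ))) := by
        unfold wd
        rw [List.map_ofFn]
        rfl
      rw [hwd] at hw
      have hlen : m = n' := by
        have := congrArg List.length hw
        simpa using this
      subst hlen
      have hfun : (fun j => ((v j : ℕ))) = rankEnc π := List.ofFn_inj.mp hw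
      refine ⟨π, hfinX.mem_toFinset.mpr hπ, ?_⟩
      funext j
      apply Fin.ext
      exact (congrFun hfun j).symm
  rw [step1]
  rw [Finset.card_eq_sum_card_fiberwise
    (f := fun v : Fin m → Fin (k + 1) => M.evalFrom M.start (wd k v))
    (t := (Finset.univ : Finset S)) (fun _ _ => Finset.mem_univ _)]
  push_cast
  apply Finset.sum_congr rfl
  intro q' _
  rw [Finset.filter_filter]
  by_cases h : q' ∈ M.accept
  · rw [if_pos h, transM_pow]
    congr 2
    apply Finset.filter_congr
    intro v _
    constructor
    · exact fun hx => hx.2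
    · exact fun hx => ⟨hx ▸ h, hx⟩
  · rw [if_neg h]
    have : (Finset.univ.filter fun v : Fin m → Fin (k + 1) =>
        M.evalFrom M.start (wd k v) ∈ M.accept ∧ M.evalFrom M.start (wd k v) = q')
        = ∅ := by
      apply Finset.filter_false_of_mem
      rintro v _ ⟨h1, h2⟩
      exact h (h2 ▸ h1)
    rw [this]
    simp

/-- if a closed set `X ⊆ Ω_k` has regular rank-encoding language,
then its enumeration sequence `aₙ = |{σ ∈ X : |σ| = n}|` eventually satisfies a
linear recurrence with constant coefficients. -/
theorem stmt16 (k : ℕ) (X : ∀ n : ℕ, Set (Equiv.Perm (Fin n)))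
    (hclosed : ClosedFamily X)
    (hsub : ∀ n : ℕ, ∀ π ∈ X n, ∀ i, rankEnc π i ≤ k)
    (hreg : Language.IsRegular
      {w : List ℕ | ∃ (n : ℕ), ∃ π ∈ X n, w = List.ofFn (rankEnc π)}) :
    ∃ (d : ℕ) (c : Fin d → ℚ) (N : ℕ), 0 < d ∧
      ∀ n : ℕ, N ≤ n →
        ((X (n + d)).ncard : ℚ) = ∑ i : Fin d, c i * ((X (n + (i : ℕ))).ncard : ℚ) := by
  classical
  obtain ⟨S, instF, M, hM⟩ := hreg
  haveI : Nonempty S := ⟨M.start⟩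
  haveI : DecidablePred (· ∈ M.accept) := fun _ => Classical.propDecidable _
  set A := transM M k with hAdef
  refine ⟨Fintype.card S, fun i => -(A.charpoly.coeff (i : ℕ)), 0, Fintype.card_pos, ?_⟩
  intro n _
  have hcount := count_eq M k X hsub hM
  have hCH := charpoly_pow_rec A n
  calc ((X (n + Fintype.card S)).ncard : ℚ)
      = ∑ q' : S, (if q' ∈ M.accept then (A ^ (n + Fintype.card S)) M.start q' else 0) :=
        hcount (n + Fintype.card S)
    _ = ∑ q' : S, ∑ i ∈ Finset.range (Fintype.card S),
          (if q' ∈ M.accept then (-(A.charpoly.coeff i)) * (A ^ (n + i)) M.start q' else 0) := by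
        apply Finset.sum_congr rfl
        intro q' _
        rw [hCH, Matrix.sum_apply]
        by_cases h : q' ∈ M.accept <;>
          simp [h, Matrix.smul_apply, smul_eq_mul]
    _ = ∑ i ∈ Finset.range (Fintype.card S), ∑ q' : S,
          (if q' ∈ M.accept then (-(A.charpoly.coeff i)) * (A ^ (n + i)) M.start q' else 0) :=
        Finset.sum_comm
    _ = ∑ i ∈ Finset.range (Fintype.card S),
          (-(A.charpoly.coeff i)) *
            ∑ q' : S, (if q' ∈ M.accept then (A ^ (n + i)) M.start q' else 0) := by
        apply Finset.sum_congr rfl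
        intro i _
        rw [Finset.mul_sum]
        apply Finset.sum_congr rfl
        intro q' _
        by_cases h : q' ∈ M.accept <;> simp [h]
    _ = ∑ i ∈ Finset.range (Fintype.card S),
          (-(A.charpoly.coeff i)) * ((X (n + i)).ncard : ℚ) := by
        apply Finset.sum_congr rfl
        intro i _
        rw [hcount (n + i)]
    _ = ∑ i : Fin (Fintype.card S),
          (-(A.charpoly.coeff (i : ℕ))) * ((X (n + (i : ℕ))).ncard : ℚ) :=
        (Fin.sum_univ_eq_sum_range
          (fun i => (-(A.charpoly.coeff i)) * ((X (n + i)).ncard : ℚ)) _).symm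
end

section
/- Let φ = f₁…f_k be a sign sequence and D_φ : [k]* → permutations the decoding map. If s, p ∈ [k]* and s is a subword (subsequence) of p, then D_φ(s) ⪯ D_φ(p). Conversely, if σ ⪯ π with σ, π ∈ W_φ, then for every encoding p of π there exists an encoding s of σ that is a subword of p. -/
/-- `IsDecode φ c π` : the permutation `π` is `D_φ(c)`, the decoding of the word
`c ∈ [k]*` with respect to the sign sequence `φ` (`true` = `+`, `false` = `-`):
the output sequence of `π` lists the symbols of `c⁻¹(1)`, …, `c⁻¹(k)` in turn,
the `j`-th block arranged increasingly if `φ j` and decreasingly otherwise.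
Equivalently, symbol `i` precedes symbol `j` in the output (`π⁻¹ i < π⁻¹ j`) iff
`c i < c j`, or `c i = c j` and `i, j` are in the right relative order for the
sign of their common block. -/
def IsDecode {k n : ℕ} (φ : Fin k → Bool) (c : Fin n → Fin k)
    (π : Equiv.Perm (Fin n)) : Prop :=
  ∀ i j : Fin n, π⁻¹ i < π⁻¹ j ↔
    (c i < c j ∨ (c i = c j ∧ (if φ (c i) then i < j else j < i)))

/-- (i) if `s = c ∘ e` is a subword of `p = c`, then
`D_φ(s) ⪯ D_φ(p)`; (ii) conversely, if `σ ⪯ π` and `c` is an encoding of `π`,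
then some subword `c ∘ e` of `c` is an encoding of `σ`. -/
theorem stmt17 {k m n : ℕ} (φ : Fin k → Bool) :
    (∀ (c : Fin n → Fin k) (e : Fin m ↪o Fin n)
        (π : Equiv.Perm (Fin n)) (τ : Equiv.Perm (Fin m)),
        IsDecode φ c π → IsDecode φ (c ∘ e) τ → Involves τ π) ∧
    (∀ (c : Fin n → Fin k) (π : Equiv.Perm (Fin n)) (σ : Equiv.Perm (Fin m)),
        IsDecode φ c π → Involves σ π →
        ∃ e : Fin m ↪o Fin n, IsDecode φ (c ∘ e) σ) := by
  constructor
  · intro c e π τ hπ hτ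
    have key : ∀ a b : Fin m, τ⁻¹ a < τ⁻¹ b ↔ π⁻¹ (e a) < π⁻¹ (e b) := by
      intro a b
      rw [hτ a b, hπ (e a) (e b)]
      simp only [Function.comp_apply, e.lt_iff_lt]
    have mono : StrictMono (fun a => π⁻¹ (e (τ a))) := by
      intro a b hab
      exact (key (τ a) (τ b)).mp (by simpa using hab)
    refine ⟨OrderEmbedding.ofStrictMono _ mono, ?_⟩
    intro a b
    simp [OrderEmbedding.coe_ofStrictMono, e.lt_iff_lt]
  · rintro c π σ hπ ⟨f, hf⟩
    have mono : StrictMono (fun a => π (f (σ⁻¹ a))) := by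
      intro a b hab
      exact (hf (σ⁻¹ a) (σ⁻¹ b)).mp (by simpa using hab)
    refine ⟨OrderEmbedding.ofStrictMono _ mono, ?_⟩
    intro a b
    have h := hπ (π (f (σ⁻¹ a))) (π (f (σ⁻¹ b)))
    simp only [Equiv.Perm.inv_def π, Equiv.symm_apply_apply, f.lt_iff_lt] at h
    have hab : π (f (σ⁻¹ a)) < π (f (σ⁻¹ b)) ↔ a < b := by
      have := hf (σ⁻¹ a) (σ⁻¹ b); simpa using this.symm
    have hba : π (f (σ⁻¹ b)) < π (f (σ⁻¹ a)) ↔ b < a := by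
      have := hf (σ⁻¹ b) (σ⁻¹ a); simpa using this.symm
    simp only [OrderEmbedding.coe_ofStrictMono, Function.comp_apply]
    rw [h, hab, hba]
    exact Iff.rfl
end

section
/- For every sign sequence φ of length k and every closed subset X of W_φ, the preimage D_φ⁻¹(X) is a regular subset of [k]*. -/
/-! ### Auxiliary results -/

section Decode

/-- Every word has a decoding: sort `Fin n` by the lexicographic key
`(c i, ±i)` determined by the sign sequence. -/
theorem existsDecode {k n : ℕ} (φ : Fin k → Bool) (c : Fin n → Fin k) :
    ∃ π : Equiv.Perm (Fin n), IsDecode φ c π := by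
  set key : Fin n → Lex (Fin k × ℕ) :=
    fun i => toLex (c i, if φ (c i) then (i : ℕ) else n - 1 - (i : ℕ)) with hkey
  have hkeylt : ∀ i j : Fin n, key i < key j ↔
      (c i < c j ∨ (c i = c j ∧ (if φ (c i) then i < j else j < i))) := by
    intro i j
    rw [hkey, Prod.Lex.lt_iff]
    dsimp only [ofLex_toLex]
    constructor
    · rintro (h | ⟨h1, h2⟩)
      · exact Or.inl h
      · refine Or.inr ⟨h1, ?_⟩
        rw [h1] at h2
        by_cases hφ : φ (c j) <;> simp [h1, hφ] at h2 ⊢ <;>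
          [exact h2; (have := i.isLt; have := j.isLt; omega)]
    · rintro (h | ⟨h1, h2⟩)
      · exact Or.inl h
      · refine Or.inr ⟨h1, ?_⟩
        rw [h1]
        by_cases hφ : φ (c j) <;> simp [h1, hφ] at h2 ⊢ <;>
          [exact h2; (have := i.isLt; have := j.isLt; omega)]
  have hinj : Function.Injective key := by
    intro i j h
    rw [hkey] at h
    have h' : (c i, if φ (c i) then (i : ℕ) else n - 1 - (i : ℕ)) =
        (c j, if φ (c j) then (j : ℕ) else n - 1 - (j : ℕ)) := h
    obtain ⟨h1, h2⟩ := Prod.ext_iff.1 h'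
    dsimp only at h1 h2
    rw [h1] at h2
    by_cases hφ : φ (c j) <;> simp [hφ] at h2 <;>
      exact Fin.ext (by have := i.isLt; have := j.isLt; omega)
  set π := Tuple.sort key with hπ
  have hsm : StrictMono (key ∘ π) :=
    (Tuple.monotone_sort key).strictMono_of_injective (hinj.comp π.injective)
  refine ⟨π, fun i j => ?_⟩
  have h1 : π⁻¹ i < π⁻¹ j ↔ key (π (π⁻¹ i)) < key (π (π⁻¹ j)) := (hsm.lt_iff_lt).symm
  rw [show π (π⁻¹ i) = i from π.apply_symm_apply i, show π (π⁻¹ j) = j from π.apply_symm_apply j] at h1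
  rw [h1, hkeylt]

/-- The decoding of a subword is involved in the decoding of the word. -/
theorem decode_involves {k m n : ℕ} (φ : Fin k → Bool) (c : Fin n → Fin k)
    (f : Fin m ↪o Fin n) (π : Equiv.Perm (Fin m)) (σ : Equiv.Perm (Fin n))
    (hπ : IsDecode φ (c ∘ f) π) (hσ : IsDecode φ c σ) : Involves π σ := by
  have hR : ∀ x y : Fin m,
      ((c ∘ f) x < (c ∘ f) y ∨ ((c ∘ f) x = (c ∘ f) y ∧
        (if φ ((c ∘ f) x) then x < y else y < x))) ↔
      (c (f x) < c (f y) ∨ (c (f x) = c (f y) ∧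
        (if φ (c (f x)) then f x < f y else f y < f x))) := by
    intro x y
    simp only [Function.comp_apply]
    refine or_congr Iff.rfl (and_congr Iff.rfl ?_)
    by_cases hφ : φ (c (f x)) <;> simp [hφ, f.lt_iff_lt]
  have hg : StrictMono (fun a : Fin m => σ⁻¹ (f (π a))) := by
    intro a b hab
    have h1 : π⁻¹ (π a) < π⁻¹ (π b) := by
      rwa [show π⁻¹ (π a) = a from π.symm_apply_apply a, show π⁻¹ (π b) = b from π.symm_apply_apply b]
    rw [hπ] at h1
    rw [hR] at h1
    exact (hσ (f (π a)) (f (π b))).2 h1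
  refine ⟨OrderEmbedding.ofStrictMono _ hg, fun a b => ?_⟩
  show π a < π b ↔ σ (σ⁻¹ (f (π a))) < σ (σ⁻¹ (f (π b)))
  rw [show σ (σ⁻¹ (f (π a))) = f (π a) from σ.apply_symm_apply _, show σ (σ⁻¹ (f (π b))) = f (π b) from σ.apply_symm_apply _]
  exact f.lt_iff_lt.symm

end Decode

section Regular

open List

variable {T : Type} [DecidableEq T]

/-- DFA recognizing `{w | b <+ w}`. -/
def upDFA (b : List T) : DFA T (Fin (b.length + 1)) where
  step s a :=
    if h : ∃ hs : (s : ℕ) < b.length, a = b.get ⟨s, hs⟩ then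
      ⟨(s : ℕ) + 1, by obtain ⟨hs, -⟩ := h; omega⟩
    else s
  start := ⟨0, by omega⟩
  accept := {s | (s : ℕ) = b.length}

theorem upDFA_evalFrom (b : List T) (w : List T) (s : Fin (b.length + 1)) :
    ((upDFA b).evalFrom s w : ℕ) = b.length ↔ b.drop s <+ w := by
  induction w generalizing s with
  | nil =>
    simp only [DFA.evalFrom, List.foldl_nil, sublist_nil, drop_eq_nil_iff]
    have := s.isLt
    omega
  | cons a w ih =>
    have hstep : (upDFA b).evalFrom s (a :: w) = (upDFA b).evalFrom ((upDFA b).step s a) w := rfl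
    rw [hstep]
    by_cases h : ∃ hs : (s : ℕ) < b.length, a = b.get ⟨s, hs⟩
    · obtain ⟨hs, ha⟩ := h
      have : (upDFA b).step s a = ⟨(s : ℕ) + 1, by omega⟩ := dif_pos ⟨hs, ha⟩
      rw [this, ih]
      rw [List.drop_eq_getElem_cons hs]
      subst ha
      simp only [List.get_eq_getElem]
      exact List.cons_sublist_cons.symm
    · have : (upDFA b).step s a = s := dif_neg h
      rw [this, ih]
      by_cases hs : (s : ℕ) < b.length
      · have hd : b.drop s = b[(s : ℕ)] :: b.drop ((s : ℕ) + 1) := List.drop_eq_getElem_cons hs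
        rw [hd]
        constructor
        · exact fun hsub => hsub.cons _
        · intro hsub
          rcases List.cons_sublist_cons'.1 hsub with h1 | ⟨h1, h2⟩
          · exact h1
          · exact absurd ⟨hs, h1.symm⟩ h
      · have : b.drop s = [] := by
          rw [List.drop_eq_nil_iff]; omega
        simp [this]

theorem upDFA_accepts (b : List T) : (upDFA b).accepts = {w | b <+ w} := by
  ext w
  rw [DFA.mem_accepts]
  have : (upDFA b).eval w = (upDFA b).evalFrom (upDFA b).start w := rfl
  rw [this]
  have h := upDFA_evalFrom b w (upDFA b).start
  exact h

theorem isRegular_up (b : List T) : Language.IsRegular {w | b <+ w} :=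
  ⟨Fin (b.length + 1), inferInstance, upDFA b, upDFA_accepts b⟩

omit [DecidableEq T] in
theorem isRegular_compl {L : Language T} (h : L.IsRegular) : Language.IsRegular (Lᶜ) := by
  obtain ⟨σ, inst, M, rfl⟩ := h
  refine ⟨σ, inst, ⟨M.step, M.start, M.acceptᶜ⟩, ?_⟩
  ext w
  rw [DFA.mem_accepts]
  constructor
  · exact fun hw hw' => hw ((DFA.mem_accepts M).1 hw')
  · exact fun hw => fun hc => hw ((DFA.mem_accepts M).2 hc)

omit [DecidableEq T] in
theorem isRegular_union {L₁ L₂ : Language T} (h₁ : L₁.IsRegular) (h₂ : L₂.IsRegular) :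
    Language.IsRegular (L₁ + L₂) := by
  obtain ⟨σ₁, i₁, M, rfl⟩ := h₁
  obtain ⟨σ₂, i₂, N, rfl⟩ := h₂
  refine ⟨σ₁ × σ₂, inferInstance,
    ⟨fun p a => (M.step p.1 a, N.step p.2 a), (M.start, N.start),
      {p | p.1 ∈ M.accept ∨ p.2 ∈ N.accept}⟩, ?_⟩
  have key : ∀ (w : List T) (p : σ₁ × σ₂),
      DFA.evalFrom ⟨fun p a => (M.step p.1 a, N.step p.2 a), (M.start, N.start),
        {p | p.1 ∈ M.accept ∨ p.2 ∈ N.accept}⟩ p w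
        = (M.evalFrom p.1 w, N.evalFrom p.2 w) := by
    intro w
    induction w with
    | nil => intro p; rfl
    | cons a w ih => intro p; exact ih (M.step p.1 a, N.step p.2 a)
  ext w
  rw [DFA.mem_accepts]
  show _ ∈ ({p | p.1 ∈ M.accept ∨ p.2 ∈ N.accept} : Set (σ₁ × σ₂)) ↔ _
  rw [show DFA.eval _ w = _ from key w (M.start, N.start)]
  rw [Language.mem_add]
  exact Iff.rfl

omit [DecidableEq T] in
theorem isRegular_empty : Language.IsRegular (0 : Language T) := by
  refine ⟨Unit, inferInstance, ⟨fun _ _ => (), (), ∅⟩, ?_⟩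
  ext w
  rw [DFA.mem_accepts]
  simp [Language.notMem_zero]

theorem isRegular_finite_union {B : Set (List T)} (hB : B.Finite) :
    Language.IsRegular {w | ∃ b ∈ B, b <+ w} := by
  refine Set.Finite.induction_on
    (motive := fun s _ => Language.IsRegular ({w | ∃ b ∈ s, b <+ w} : Language T)) B hB ?_ ?_
  · show Language.IsRegular ({w | ∃ b ∈ (∅ : Set (List T)), b <+ w} : Language T)
    have : ({w | ∃ b ∈ (∅ : Set (List T)), b <+ w} : Language T) = (0 : Language T) := by
      ext w
      constructor
      · rintro ⟨b, hb, -⟩; exact absurd hb (Set.notMem_empty b)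
      · intro h; exact absurd h (Language.notMem_zero w)
    rw [this]; exact isRegular_empty
  · intro a s _ _ ih
    show Language.IsRegular ({w | ∃ b ∈ insert a s, b <+ w} : Language T)
    set A : Language T := {w : List T | a <+ w} with hA
    set S : Language T := {w | ∃ b ∈ s, b <+ w} with hS
    have : ({w | ∃ b ∈ insert a s, b <+ w} : Language T) = A + S := by
      ext w
      show w ∈ ({w | ∃ b ∈ insert a s, b <+ w} : Language T) ↔ w ∈ A + S
      rw [Language.mem_add, hA, hS]
      simp only [Set.mem_setOf_eq, Set.mem_insert_iff]
      constructor
      · rintro ⟨b, (rfl | hb), hsub⟩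
        · exact Or.inl hsub
        · exact Or.inr ⟨b, hb, hsub⟩
      · rintro (h | ⟨b, hb, hsub⟩)
        · exact ⟨a, Or.inl rfl, h⟩
        · exact ⟨b, Or.inr hb, hsub⟩
    rw [this]
    exact isRegular_union (isRegular_up a) ih

omit [DecidableEq T] in
/-- A language over a finite alphabet which is closed under taking subwords is regular. -/
theorem sublistClosed_regular [Finite T] (L : Language T)
    (hL : ∀ w₁ w₂ : List T, w₁ <+ w₂ → w₂ ∈ L → w₁ ∈ L) : L.IsRegular := by
  haveI := Classical.decEq T
  set U : Set (List T) := {w | w ∉ L} with hUdef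
  have huniv : (Set.univ : Set T).PartiallyWellOrderedOn (· = ·) := by
    rw [Set.partiallyWellOrderedOn_iff_exists_lt]
    intro f _
    obtain ⟨m, n, hmn, h⟩ := Finite.exists_ne_map_eq_of_infinite f
    rcases hmn.lt_or_gt with h' | h'
    · exact ⟨m, n, h', h⟩
    · exact ⟨n, m, h', h.symm⟩
  have hpwo := Set.PartiallyWellOrderedOn.partiallyWellOrderedOn_sublistForall₂
    (· = · : T → T → Prop) huniv
  have hpwo' : ∀ f : ℕ → List T, ∃ m n, m < n ∧ f m <+ f n := by
    intro f
    obtain ⟨m, n, h1, h2⟩ := (Set.partiallyWellOrderedOn_iff_exists_lt.1 hpwo) f (fun n x _ => Set.mem_univ x)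
    refine ⟨m, n, h1, ?_⟩
    rw [List.sublistForall₂_iff] at h2
    obtain ⟨l, hl1, hl2⟩ := h2
    rw [List.forall₂_eq_eq_eq] at hl1
    exact hl1 ▸ hl2
  set B : Set (List T) := {w | w ∈ U ∧ ∀ w', w' <+ w → w' ≠ w → w' ∉ U} with hBdef
  have hanti : IsAntichain (· <+ ·) B := by
    intro a ha b hb hne hsub
    exact hb.2 a hsub hne ha.1
  have hpwoB : B.PartiallyWellOrderedOn (· <+ ·) := by
    rw [Set.partiallyWellOrderedOn_iff_exists_lt]
    intro f _
    exact hpwo' f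
  have hBfin : B.Finite := hanti.finite_of_partiallyWellOrderedOn hpwoB
  have key : ∀ (N : ℕ) (w : List T), w.length ≤ N → w ∈ U → ∃ b ∈ B, b <+ w := by
    intro N
    induction N with
    | zero =>
      intro w hw hUw
      have hnil : w = [] := List.length_eq_zero_iff.1 (Nat.le_zero.1 hw)
      subst hnil
      refine ⟨[], ⟨hUw, ?_⟩, List.Sublist.refl _⟩
      intro w' hsub hne
      rw [List.sublist_nil] at hsub
      exact absurd hsub hne
    | succ N ih =>
      intro w hw hUw
      by_cases hb : w ∈ B
      · exact ⟨w, hb, List.Sublist.refl _⟩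
      · have : ∃ w', w' <+ w ∧ w' ≠ w ∧ w' ∈ U := by
          by_contra hc
          push_neg at hc
          exact hb ⟨hUw, fun w' h1 h2 => hc w' h1 h2⟩
        obtain ⟨w', h1, h2, h3⟩ := this
        have hlen : w'.length < w.length := by
          rcases lt_or_eq_of_le h1.length_le with h | h
          · exact h
          · exact absurd (h1.eq_of_length h) h2
        obtain ⟨b, hbB, hbsub⟩ := ih w' (by omega) h3
        exact ⟨b, hbB, hbsub.trans h1⟩
  have hU : U = {w | ∃ b ∈ B, b <+ w} := by
    ext w
    constructor
    · exact fun hw => key w.length w le_rfl hw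
    · rintro ⟨b, hbB, hbsub⟩
      intro hwL
      exact hbB.1 (hL b w hbsub hwL)
  have hLU : L = ({w : List T | ∃ b ∈ B, b <+ w} : Language T)ᶜ := by
    rw [← hU]
    ext w
    exact not_not.symm
  rw [hLU]
  exact isRegular_compl (isRegular_finite_union hBfin)

end Regular

/-- for every sign sequence `φ` and every closed subset `X` of
`W_φ`, the set of encodings `D_φ⁻¹(X)` is a regular language over `[k]`. -/
theorem stmt18 {k : ℕ} (φ : Fin k → Bool) (X : ∀ n : ℕ, Set (Equiv.Perm (Fin n)))
    (hclosed : ClosedFamily X)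
    (hsub : ∀ n : ℕ, ∀ π ∈ X n, ∃ c : Fin n → Fin k, IsDecode φ c π) :
    Language.IsRegular
      {w : List (Fin k) | ∃ π ∈ X w.length, IsDecode φ w.get π} := by
  apply sublistClosed_regular
  intro w₁ w₂ hsubl hw₂
  obtain ⟨σ, hσX, hσdec⟩ := hw₂
  obtain ⟨f, hf⟩ := List.sublist_iff_exists_fin_orderEmbedding_get_eq.1 hsubl
  obtain ⟨π, hπ⟩ := existsDecode φ (w₂.get ∘ f)
  have hc : w₁.get = w₂.get ∘ f := funext hf
  have hπ' : IsDecode φ w₁.get π := by rw [hc]; exact hπ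
  have hinv := decode_involves φ w₂.get f π σ hπ hσdec
  exact ⟨π, hclosed _ _ π σ hσX hinv, hπ'⟩
end
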